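/- arXiv:2512.19558 — 3 statements merged into one kernel-verified Lean document; each statement's English description precedes it below -/
import Mathlib

section
/- Let 𝒞 be a finitely complete category in which strong epimorphisms are stable under pullback. Suppose given objects X₁, X₂ and two sets of factorization data: a monomorphism i : G → X₁, a strong epimorphism e : G → M, a strong epimorphism p : S → M, a monomorphism m : S → X₂, and morphisms q₁ : P → G, q₂ : P → S with e ∘ q₁ = p ∘ q₂ such that this square is both a pullback square and a pushout square; and likewise primed data i′ : G′ → X₁, e′ : G′ → M′, p′ : S′ → M′, m′ : S′ → X₂, q₁′ : P′ → G′, q₂′ : P′ → S′ with its square both a pullback and a pushout. If φ : P → P′ is an isomorphism satisfying i′ ∘ q₁′ ∘ φ = i ∘ q₁ and m′ ∘ q₂′ ∘ φ = m ∘ q₂, then there exist isomorphisms ψ₁ : G → G′, ψ₂ : S → S′ and α : M → M′ such that i′ ∘ ψ₁ = i, m′ ∘ ψ₂ = m, ψ₁ ∘ q₁ = q₁′ ∘ φ, ψ₂ ∘ q₂ = q₂′ ∘ φ, e′ ∘ ψ₁ = α ∘ e, and p′ ∘ ψ₂ = α ∘ p. -/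
open CategoryTheory Limits

/-- Essential uniqueness of reduced factorizations of binary relations in
a finitely complete category in which strong epimorphisms are stable under pullback.
Given two bicartesian (pullback-and-pushout) squares built from the factorization data
`(i, e, p, m)` and `(i′, e′, p′, m′)` as in the statement, and an isomorphism
`φ : P ≅ P′` compatible with the induced legs, there are isomorphisms
`ψ₁ : G ≅ G′`, `ψ₂ : S ≅ S′` and `α : M ≅ M′` compatible with all the data. -/
theorem stmt2 {𝒞 : Type*} [Category 𝒞] [HasFiniteLimits 𝒞]
    (hstab : ∀ ⦃W X Y Z : 𝒞⦄ (fst : W ⟶ X) (snd : W ⟶ Y) (f : X ⟶ Z) (g : Y ⟶ Z),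
      IsPullback fst snd f g → StrongEpi g → StrongEpi fst)
    {X₁ X₂ G M S P G' M' S' P' : 𝒞}
    (i : G ⟶ X₁) (e : G ⟶ M) (p : S ⟶ M) (m : S ⟶ X₂) (q₁ : P ⟶ G) (q₂ : P ⟶ S)
    (hi : Mono i) (he : StrongEpi e) (hp : StrongEpi p) (hm : Mono m)
    (hpb : IsPullback q₁ q₂ e p) (hpo : IsPushout q₁ q₂ e p)
    (i' : G' ⟶ X₁) (e' : G' ⟶ M') (p' : S' ⟶ M') (m' : S' ⟶ X₂)
    (q₁' : P' ⟶ G') (q₂' : P' ⟶ S')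
    (hi' : Mono i') (he' : StrongEpi e') (hp' : StrongEpi p') (hm' : Mono m')
    (hpb' : IsPullback q₁' q₂' e' p') (hpo' : IsPushout q₁' q₂' e' p')
    (φ : P ≅ P')
    (hφ₁ : φ.hom ≫ q₁' ≫ i' = q₁ ≫ i) (hφ₂ : φ.hom ≫ q₂' ≫ m' = q₂ ≫ m) :
    ∃ (ψ₁ : G ≅ G') (ψ₂ : S ≅ S') (α : M ≅ M'),
      ψ₁.hom ≫ i' = i ∧ ψ₂.hom ≫ m' = m ∧
      q₁ ≫ ψ₁.hom = φ.hom ≫ q₁' ∧ q₂ ≫ ψ₂.hom = φ.hom ≫ q₂' ∧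
      ψ₁.hom ≫ e' = e ≫ α.hom ∧ ψ₂.hom ≫ p' = p ≫ α.hom := by
  haveI := hi; haveI := hi'; haveI := hm; haveI := hm'
  haveI := he; haveI := he'; haveI := hp; haveI := hp'
  haveI hq₁ : StrongEpi q₁ := hstab q₁ q₂ e p hpb hp
  haveI hq₂ : StrongEpi q₂ := hstab q₂ q₁ p e hpb.flip he
  haveI hq₁' : StrongEpi q₁' := hstab q₁' q₂' e' p' hpb' hp'
  haveI hq₂' : StrongEpi q₂' := hstab q₂' q₁' p' e' hpb'.flip he'
  -- ψ₁
  have sq₁ : CommSq (φ.hom ≫ q₁') q₁ i' i := ⟨by rw [Category.assoc, hφ₁]⟩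
  have sq₁' : CommSq (φ.inv ≫ q₁) q₁' i i' := ⟨by
    rw [Category.assoc, ← hφ₁, Iso.inv_hom_id_assoc]⟩
  let ψ₁h : G ⟶ G' := sq₁.lift
  let ψ₁i : G' ⟶ G := sq₁'.lift
  have hψ₁hi : ψ₁h ≫ ψ₁i = 𝟙 G := by
    rw [← cancel_mono i, Category.assoc, sq₁'.fac_right, sq₁.fac_right, Category.id_comp]
  have hψ₁ih : ψ₁i ≫ ψ₁h = 𝟙 G' := by
    rw [← cancel_mono i', Category.assoc, sq₁.fac_right, sq₁'.fac_right, Category.id_comp]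
  -- ψ₂
  have sq₂ : CommSq (φ.hom ≫ q₂') q₂ m' m := ⟨by rw [Category.assoc, hφ₂]⟩
  have sq₂' : CommSq (φ.inv ≫ q₂) q₂' m m' := ⟨by
    rw [Category.assoc, ← hφ₂, Iso.inv_hom_id_assoc]⟩
  let ψ₂h : S ⟶ S' := sq₂.lift
  let ψ₂i : S' ⟶ S := sq₂'.lift
  have hψ₂hi : ψ₂h ≫ ψ₂i = 𝟙 S := by
    rw [← cancel_mono m, Category.assoc, sq₂'.fac_right, sq₂.fac_right, Category.id_comp]
  have hψ₂ih : ψ₂i ≫ ψ₂h = 𝟙 S' := by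
    rw [← cancel_mono m', Category.assoc, sq₂.fac_right, sq₂'.fac_right, Category.id_comp]
  -- α
  have hw : q₁ ≫ ψ₁h ≫ e' = q₂ ≫ ψ₂h ≫ p' := by
    rw [← Category.assoc, sq₁.fac_left, ← Category.assoc, sq₂.fac_left,
      Category.assoc, Category.assoc, hpb'.w]
  have hw' : q₁' ≫ ψ₁i ≫ e = q₂' ≫ ψ₂i ≫ p := by
    rw [← Category.assoc, sq₁'.fac_left, ← Category.assoc, sq₂'.fac_left,
      Category.assoc, Category.assoc, hpb.w]
  let αh : M ⟶ M' := hpo.desc (ψ₁h ≫ e') (ψ₂h ≫ p') hw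
  let αi : M' ⟶ M := hpo'.desc (ψ₁i ≫ e) (ψ₂i ≫ p) hw'
  have hαe : e ≫ αh = ψ₁h ≫ e' := hpo.inl_desc _ _ _
  have hαp : p ≫ αh = ψ₂h ≫ p' := hpo.inr_desc _ _ _
  have hαe' : e' ≫ αi = ψ₁i ≫ e := hpo'.inl_desc _ _ _
  have hαp' : p' ≫ αi = ψ₂i ≫ p := hpo'.inr_desc _ _ _
  have hαhi : αh ≫ αi = 𝟙 M := by
    rw [← cancel_epi e, ← Category.assoc, hαe, Category.assoc, hαe', ← Category.assoc,
      hψ₁hi, Category.id_comp, Category.comp_id]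
  have hαih : αi ≫ αh = 𝟙 M' := by
    rw [← cancel_epi e', ← Category.assoc, hαe', Category.assoc, hαe, ← Category.assoc,
      hψ₁ih, Category.id_comp, Category.comp_id]
  exact ⟨⟨ψ₁h, ψ₁i, hψ₁hi, hψ₁ih⟩, ⟨ψ₂h, ψ₂i, hψ₂hi, hψ₂ih⟩, ⟨αh, αi, hαhi, hαih⟩,
    sq₁.fac_right, sq₂.fac_right, sq₁.fac_left, sq₂.fac_left, hαe.symm, hαp.symm⟩
end

section
/- Let 𝒞 be a finitely complete category in which strong epimorphisms are stable under pullback. Suppose given morphisms f_b : R → B, f_j : R → X and f_k : R → W such that f_k is a strong epimorphism and the induced morphism ⟨f_b, f_j⟩ : R → B × X is a monomorphism. Let s₁ : S → X be a strong epimorphism and s₂ : S → X′ a monomorphism, and let R̃, with projections s̃₁ : R̃ → R and f̃_j : R̃ → S, be a pullback of f_j and s₁. Then f_k ∘ s̃₁ : R̃ → W is a strong epimorphism and the induced morphism ⟨f_b ∘ s̃₁, s₂ ∘ f̃_j⟩ : R̃ → B × X′ is a monomorphism. -/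
/-!
Pulling back along the strong epimorphism `s₁` gives a strong epimorphism `s̃₁`, and strong
epimorphisms compose. For the monomorphism, two maps into `R̃` that agree after
`⟨f_b ∘ s̃₁, s₂ ∘ f̃_j⟩` agree after `f̃_j` because `s₂` is monic; hence they agree after
`f_j ∘ s̃₁ = s₁ ∘ f̃_j`, so after `⟨f_b, f_j⟩ ∘ s̃₁`, hence after `s̃₁`, and the pullback
projections are jointly monic.
-/

open CategoryTheory Limits

namespace CategoryTheory

variable {C : Type*} [Category C]

theorem mono_prod_lift_of_isPullback {R B X S X' P : C}
    [HasBinaryProduct B X] [HasBinaryProduct B X']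
    (f_b : R ⟶ B) (f_j : R ⟶ X) [Mono (prod.lift f_b f_j)] (s₁ : S ⟶ X) (s₂ : S ⟶ X')
    [Mono s₂] (p : P ⟶ R) (q : P ⟶ S) (hpb : IsPullback p q f_j s₁) :
    Mono (prod.lift (p ≫ f_b) (q ≫ s₂)) := by
  refine ⟨fun {Z} a b h => ?_⟩
  have h_b : a ≫ p ≫ f_b = b ≫ p ≫ f_b := by
    simpa [prod.lift_fst] using h =≫ prod.fst
  have h_q : a ≫ q = b ≫ q := by
    rw [← cancel_mono s₂]
    simpa [prod.lift_snd] using h =≫ prod.snd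
  have h_j : a ≫ p ≫ f_j = b ≫ p ≫ f_j := by
    rw [hpb.w, reassoc_of% h_q]
  have h_p : a ≫ p = b ≫ p := by
    rw [← cancel_mono (prod.lift f_b f_j)]
    ext <;> simpa [prod.lift_fst, prod.lift_snd]
  exact hpb.hom_ext h_p h_q

end CategoryTheory

/-- In a finitely complete category in which strong epimorphisms are
stable under pullback: if `f_k : R ⟶ W` is a strong epimorphism, `⟨f_b, f_j⟩ : R ⟶ B ⨯ X`
is a monomorphism, `s₁ : S ⟶ X` is a strong epimorphism, `s₂ : S ⟶ X′` is a monomorphism,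
and `R̃` (with projections `s̃₁`, `f̃_j`) is a pullback of `f_j` and `s₁`, then
`f_k ∘ s̃₁` is a strong epimorphism and `⟨f_b ∘ s̃₁, s₂ ∘ f̃_j⟩ : R̃ ⟶ B ⨯ X′` is a
monomorphism. -/
theorem stmt3 {𝒞 : Type*} [Category 𝒞] [HasFiniteLimits 𝒞]
    (hstab : ∀ ⦃W X Y Z : 𝒞⦄ (fst : W ⟶ X) (snd : W ⟶ Y) (f : X ⟶ Z) (g : Y ⟶ Z),
      IsPullback fst snd f g → StrongEpi g → StrongEpi fst)
    {R B X W S X' R' : 𝒞}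
    (f_b : R ⟶ B) (f_j : R ⟶ X) (f_k : R ⟶ W)
    (hfk : StrongEpi f_k) (hmono : Mono (prod.lift f_b f_j))
    (s₁ : S ⟶ X) (s₂ : S ⟶ X')
    (hs₁ : StrongEpi s₁) (hs₂ : Mono s₂)
    (s'₁ : R' ⟶ R) (f'_j : R' ⟶ S)
    (hpb : IsPullback s'₁ f'_j f_j s₁) :
    StrongEpi (s'₁ ≫ f_k) ∧ Mono (prod.lift (s'₁ ≫ f_b) (f'_j ≫ s₂)) := by
  have : StrongEpi s'₁ := hstab s'₁ f'_j f_j s₁ hpb hs₁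
  exact ⟨strongEpi_comp s'₁ f_k, mono_prod_lift_of_isPullback f_b f_j s₁ s₂ s'₁ f'_j hpb⟩
end

section
/- Let 𝒞 be a finitely complete category in which strong epimorphisms are stable under pullback and in which every object has only finitely many subobjects. For objects X and Y of 𝒞, write X ⪯ Y if there exist an object W, a monomorphism W → Y and a strong epimorphism W → X. Then the relation ⪯ is reflexive and transitive, and if both X ⪯ Y and Y ⪯ X hold, then X and Y are isomorphic; consequently ⪯ induces a partial order on the set of isomorphism classes of objects of 𝒞. -/
/-!
An injective monotone self-map of a finite poset fixes every point that it moves up or down.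
Pulling subobjects back along a strong epimorphism is injective (stability plus the lifting
property against monomorphisms), and pushing them forward along a monomorphism is injective.
If `X ⪯ Y ⪯ X` via `V ↪ Y, V ↠ X` and `W ↪ X, W ↠ Y`, composing these four maps gives an
injective monotone self-map of `Sub X` whose values lie below `W ↪ X`; it fixes `⊤`, so
`W ↪ X` is an isomorphism and there are strong epimorphisms `X ↠ Y ↠ X`. Their composite `h`
is a strong epimorphic endomorphism, and pulling back along `h × h` is injective on
`Sub (X × X)` and sends the diagonal to the kernel pair of `h`, which contains it. Hence the
kernel pair of `h` is the diagonal, `h` is mono, and so `X ↠ Y` is an isomorphism.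
-/

open CategoryTheory Limits

/-- `Subquot X Y` means that `X` is a subquotient of `Y`: there are an object `W`,
a monomorphism `W ⟶ Y` and a strong epimorphism `W ⟶ X`. -/
def Subquot {𝒞 : Type*} [Category 𝒞] (X Y : 𝒞) : Prop :=
  ∃ (W : 𝒞) (m : W ⟶ Y) (e : W ⟶ X), Mono m ∧ StrongEpi e

theorem Monotone.apply_eq_of_le_apply {α : Type*} [PartialOrder α] [Finite α] {f : α → α}
    (hf : Monotone f) (hinj : Function.Injective f) {x : α} (hx : x ≤ f x) : f x = x := by
  let σ : Equiv.Perm α := Equiv.ofBijective f hinj.bijective_of_finite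
  have hperiodic : f^[orderOf σ] x = x := by
    rw [show f = σ from rfl, Equiv.Perm.iterate_eq_pow, pow_orderOf_eq_one]
    rfl
  refine le_antisymm ?_ hx
  calc f x = f^[1] x := rfl
    _ ≤ f^[orderOf σ] x := hf.monotone_iterate_of_le_map hx (orderOf_pos σ)
    _ = x := hperiodic

theorem Monotone.apply_eq_of_apply_le {α : Type*} [PartialOrder α] [Finite α] {f : α → α}
    (hf : Monotone f) (hinj : Function.Injective f) {x : α} (hx : f x ≤ x) : f x = x :=
  hf.dual.apply_eq_of_le_apply (α := αᵒᵈ) hinj hx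

theorem Quotient.exists_isPartialOrder_of_isPreorder {α : Type*} (s : Setoid α)
    (r : α → α → Prop) [IsPreorder α r] (hle : ∀ a b, a ≈ b → r a b)
    (hanti : ∀ a b, r a b → r b a → a ≈ b) :
    ∃ le : Quotient s → Quotient s → Prop,
      (∀ a b, le (Quotient.mk s a) (Quotient.mk s b) ↔ r a b) ∧ IsPartialOrder (Quotient s) le := by
  have hcompat : ∀ a₁ b₁ a₂ b₂, a₁ ≈ a₂ → b₁ ≈ b₂ → r a₁ b₁ = r a₂ b₂ := fun a₁ b₁ a₂ b₂ ha hb ↦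
    propext ⟨fun h ↦ trans_of r (trans_of r (hle _ _ (Setoid.symm ha)) h) (hle _ _ hb),
      fun h ↦ trans_of r (trans_of r (hle _ _ ha) h) (hle _ _ (Setoid.symm hb))⟩
  refine ⟨Quotient.lift₂ r hcompat, fun _ _ ↦ Iff.rfl,
    { refl := ?_, trans := ?_, antisymm := ?_ }⟩
  · rintro ⟨a⟩
    exact refl_of r a
  · rintro ⟨a⟩ ⟨b⟩ ⟨c⟩
    exact trans_of r
  · rintro ⟨a⟩ ⟨b⟩ hab hba
    exact Quotient.sound (hanti a b hab hba)

def StrongEpisStableUnderPullback (𝒞 : Type*) [Category 𝒞] : Prop :=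
  ∀ ⦃W X Y Z : 𝒞⦄ (fst : W ⟶ X) (snd : W ⟶ Y) (f : X ⟶ Z) (g : Y ⟶ Z),
    IsPullback fst snd f g → StrongEpi g → StrongEpi fst

section

variable {𝒞 : Type*} [Category 𝒞]

section Diagonal

variable [HasPullbacks 𝒞] [HasBinaryProducts 𝒞]

theorem mono_of_pullback_diag_le {X Y : 𝒞} (h : X ⟶ Y)
    (hle : (Subobject.pullback (prod.map h h)).obj (Subobject.mk (diag Y)) ≤
      Subobject.mk (diag X)) : Mono h := by
  refine ⟨fun u v huv ↦ ?_⟩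
  have hfac : (Subobject.mk (diag X)).Factors (prod.lift u v) :=
    Subobject.factors_of_le _ hle <|
      (pullback_factors_iff _ _ _).mpr ⟨u ≫ h, by ext <;> simp [huv]⟩
  obtain ⟨k, hk⟩ : ∃ k, k ≫ diag X = prod.lift u v := hfac
  have hku : k = u := by
    simpa only [Category.assoc, prod.lift_fst, Category.comp_id] using hk =≫ prod.fst
  have hkv : k = v := by
    simpa only [Category.assoc, prod.lift_snd, Category.comp_id] using hk =≫ prod.snd
  exact hku.symm.trans hkv

theorem diag_le_pullback_diag {X Y : 𝒞} (h : X ⟶ Y) :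
    Subobject.mk (diag X) ≤ (Subobject.pullback (prod.map h h)).obj (Subobject.mk (diag Y)) := by
  refine Subobject.le_of_factors ?_
  rw [← Subobject.underlyingIso_hom_comp_eq_mk]
  exact Subobject.factors_of_factors_right _ <|
    (pullback_factors_iff _ _ _).mpr ⟨h, by ext <;> simp⟩

end Diagonal

namespace StrongEpisStableUnderPullback

theorem strongEpi_prod_map [HasBinaryProducts 𝒞] (hstab : StrongEpisStableUnderPullback 𝒞)
    {A B C D : 𝒞} (f : A ⟶ B) (g : C ⟶ D) [StrongEpi f] [StrongEpi g] :
    StrongEpi (prod.map f g) := by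
  have : StrongEpi (prod.map f (𝟙 C)) :=
    hstab _ _ _ _ (IsPullback.of_prod_fst_with_id f C).flip ‹_›
  have : StrongEpi (prod.map g (𝟙 B)) :=
    hstab _ _ _ _ (IsPullback.of_prod_fst_with_id g B).flip ‹_›
  have hswap : prod.map (𝟙 B) g =
      (prod.braiding B C).hom ≫ prod.map g (𝟙 B) ≫ (prod.braiding B D).inv := by
    rw [← Category.assoc, Iso.eq_comp_inv, braid_natural]
  rw [show prod.map f g = prod.map f (𝟙 C) ≫ prod.map (𝟙 B) g by simp, hswap]
  infer_instance

theorem le_of_pullback_le_pullback [HasPullbacks 𝒞] (hstab : StrongEpisStableUnderPullback 𝒞)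
    {X Y : 𝒞} (e : X ⟶ Y) [StrongEpi e] {S T : Subobject Y}
    (h : (Subobject.pullback e).obj S ≤ (Subobject.pullback e).obj T) : S ≤ T := by
  have : StrongEpi (Subobject.pullbackπ e S) := hstab _ _ _ _ (Subobject.isPullback e S) ‹_›
  have sq : CommSq (Subobject.ofLE _ _ h ≫ Subobject.pullbackπ e T) (Subobject.pullbackπ e S)
      T.arrow S.arrow := ⟨by
    simp only [Category.assoc, (Subobject.isPullback e T).w, (Subobject.isPullback e S).w,
      Subobject.ofLE_arrow_assoc]⟩
  exact Subobject.le_of_comm sq.lift sq.fac_right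

theorem pullback_obj_injective [HasPullbacks 𝒞] (hstab : StrongEpisStableUnderPullback 𝒞)
    {X Y : 𝒞} (e : X ⟶ Y) [StrongEpi e] : Function.Injective (Subobject.pullback e).obj :=
  fun _ _ h ↦ (hstab.le_of_pullback_le_pullback e h.le).antisymm
    (hstab.le_of_pullback_le_pullback e h.ge)

theorem mono_of_strongEpi_endo [HasPullbacks 𝒞] [HasBinaryProducts 𝒞]
    (hstab : StrongEpisStableUnderPullback 𝒞) {X : 𝒞} [Finite (Subobject (X ⨯ X))]
    (h : X ⟶ X) [StrongEpi h] : Mono h := by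
  have := hstab.strongEpi_prod_map h h
  -- the pullback of the diagonal along `h × h` is the kernel pair of `h`
  refine mono_of_pullback_diag_le h (le_of_eq ?_)
  exact (Subobject.pullback _).monotone.apply_eq_of_le_apply (hstab.pullback_obj_injective _)
    (diag_le_pullback_diag h)

end StrongEpisStableUnderPullback

namespace Subquot

theorem refl (X : 𝒞) : Subquot X X :=
  ⟨X, 𝟙 X, 𝟙 X, inferInstance, inferInstance⟩

theorem of_iso {X Y : 𝒞} (i : X ≅ Y) : Subquot X Y :=
  ⟨X, i.hom, 𝟙 X, inferInstance, inferInstance⟩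

variable [HasPullbacks 𝒞]

theorem trans (hstab : StrongEpisStableUnderPullback 𝒞) {X Y Z : 𝒞} (hXY : Subquot X Y)
    (hYZ : Subquot Y Z) : Subquot X Z := by
  obtain ⟨V, m, e, hm, he⟩ := hXY
  obtain ⟨W, n, q, hn, hq⟩ := hYZ
  have : StrongEpi (pullback.fst m q) := hstab _ _ _ _ (IsPullback.of_hasPullback m q) hq
  exact ⟨pullback m q, pullback.snd m q ≫ n, pullback.fst m q ≫ e, inferInstance, inferInstance⟩

theorem isIso_of_mono_of_strongEpi (hstab : StrongEpisStableUnderPullback 𝒞) {X Y : 𝒞}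
    [Finite (Subobject X)] (hXY : Subquot X Y) {W : 𝒞} (m : W ⟶ X) [Mono m] (e : W ⟶ Y)
    [StrongEpi e] : IsIso m := by
  obtain ⟨V, n, q, hn, hq⟩ := hXY
  let φ := (Subobject.map m).obj ∘ (Subobject.pullback e).obj ∘ (Subobject.map n).obj ∘
    (Subobject.pullback q).obj
  have hφ : Monotone φ :=
    (Subobject.map m).monotone.comp <| (Subobject.pullback e).monotone.comp <|
      (Subobject.map n).monotone.comp (Subobject.pullback q).monotone
  have hφinj : Function.Injective φ := (Subobject.map_obj_injective m).comp <|
    (hstab.pullback_obj_injective e).comp <|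
    (Subobject.map_obj_injective n).comp (hstab.pullback_obj_injective q)
  rw [Subobject.isIso_iff_mk_eq_top, ← Subobject.map_top, eq_top_iff,
    ← hφ.apply_eq_of_apply_le hφinj le_top]
  exact (Subobject.map m).monotone le_top

theorem exists_strongEpi (hstab : StrongEpisStableUnderPullback 𝒞) {X Y : 𝒞}
    [Finite (Subobject X)] (hXY : Subquot X Y) (hYX : Subquot Y X) : ∃ f : X ⟶ Y, StrongEpi f := by
  obtain ⟨W, m, e, hm, he⟩ := hYX
  have := isIso_of_mono_of_strongEpi hstab hXY m e
  exact ⟨inv m ≫ e, inferInstance⟩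

theorem nonempty_iso [HasBinaryProducts 𝒞] (hstab : StrongEpisStableUnderPullback 𝒞)
    {X Y : 𝒞} [Finite (Subobject X)] [Finite (Subobject Y)] [Finite (Subobject (X ⨯ X))]
    (hXY : Subquot X Y) (hYX : Subquot Y X) : Nonempty (X ≅ Y) := by
  obtain ⟨f, hf⟩ := exists_strongEpi hstab hXY hYX
  obtain ⟨g, hg⟩ := exists_strongEpi hstab hYX hXY
  have : Mono (f ≫ g) := hstab.mono_of_strongEpi_endo (f ≫ g)
  have : Mono f := mono_of_mono f g
  have : IsIso f := CategoryTheory.isIso_of_mono_of_strongEpi f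
  exact ⟨asIso f⟩

end Subquot

end

/-- In a finitely complete category in which strong epimorphisms are
stable under pullback and every object has only finitely many subobjects, the subquotient
relation `⪯` is reflexive and transitive, two objects that are subquotients of each other
are isomorphic, and consequently `⪯` induces a partial order on the set of isomorphism
classes of objects. -/
theorem stmt4 {𝒞 : Type*} [Category 𝒞] [HasFiniteLimits 𝒞]
    (hstab : ∀ ⦃W X Y Z : 𝒞⦄ (fst : W ⟶ X) (snd : W ⟶ Y) (f : X ⟶ Z) (g : Y ⟶ Z),
      IsPullback fst snd f g → StrongEpi g → StrongEpi fst)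
    (hfin : ∀ X : 𝒞, Finite (Subobject X)) :
    (∀ X : 𝒞, Subquot X X) ∧
    (∀ X Y Z : 𝒞, Subquot X Y → Subquot Y Z → Subquot X Z) ∧
    (∀ X Y : 𝒞, Subquot X Y → Subquot Y X → Nonempty (X ≅ Y)) ∧
    ∃ le : Quotient (isIsomorphicSetoid 𝒞) → Quotient (isIsomorphicSetoid 𝒞) → Prop,
      (∀ X Y : 𝒞, le (Quotient.mk (isIsomorphicSetoid 𝒞) X)
          (Quotient.mk (isIsomorphicSetoid 𝒞) Y) ↔ Subquot X Y) ∧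
      IsPartialOrder (Quotient (isIsomorphicSetoid 𝒞)) le := by
  have hantisymm (X Y : 𝒞) (hXY : Subquot X Y) (hYX : Subquot Y X) : Nonempty (X ≅ Y) :=
    have := hfin X
    have := hfin Y
    have := hfin (X ⨯ X)
    Subquot.nonempty_iso hstab hXY hYX
  have : IsPreorder 𝒞 Subquot :=
    { refl := Subquot.refl, trans := fun _ _ _ ↦ Subquot.trans hstab }
  exact ⟨Subquot.refl, fun _ _ _ ↦ Subquot.trans hstab, hantisymm,
    Quotient.exists_isPartialOrder_of_isPreorder _ Subquot (fun _ _ ⟨i⟩ ↦ Subquot.of_iso i)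
      hantisymm⟩
end
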